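/- arXiv:2402.06641 — 6 statements merged into one kernel-verified Lean document; each statement's English description precedes it below -/
import Mathlib

section
/- Fix a real number θ with 0 < θ < 1. Then, as N → ∞ through the positive integers, 1 − 1/(2N) + sin((2N−1)θπ/N)/(2N·sin(θπ/N)) = 1 + sin(2πθ)/(2πθ) − (1 + cos(2πθ))/(2N) − πθ·sin(2πθ)/(6N²) + O(N^{−3}); that is, the difference between the left-hand side and the first four terms on the right is O(N^{−3}) as N → ∞, with implied constant allowed to depend on θ. -/
/-!
Put `x = θπ/N`. Since `(2N - 1)θπ/N = 2πθ - x`, expanding `sin (2πθ - x)` shows that the left-hand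
side minus the four main terms is exactly `sin (2πθ) / (2N) · (cot x - 1/x + x/3)`. The Laurent
expansion `cot x = 1/x - x/3 + O(x³)` makes the last factor `O(N⁻³)` (so the error is even `O(N⁻⁴)`).
-/

open Real Filter Asymptotics Topology

noncomputable def cotRemainder (x : ℝ) : ℝ := cos x / sin x - 1 / x + x / 3

lemma half_sq_le_mul_sin {x : ℝ} (hx : |x| ≤ 1) : x ^ 2 / 2 ≤ x * sin x := by
  have key : ∀ y : ℝ, 0 ≤ y → y ≤ 1 → y ^ 2 / 2 ≤ y * sin y := fun y hy0 hy1 => by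
    have := mul_le_sin hy0 (hy1.trans (by linarith [pi_gt_three]))
    have : 1 / 2 ≤ 2 / π := by rw [div_le_div_iff₀ two_pos pi_pos]; linarith [pi_lt_four]
    nlinarith
  rcases le_total 0 x with h | h
  · exact key x h (le_of_abs_le hx)
  · simpa [sin_neg] using key (-x) (by linarith) (by linarith [neg_le_of_abs_le hx])

lemma abs_cotRemainder_le {x : ℝ} (hx : |x| ≤ 1) : |cotRemainder x| ≤ |x| ^ 3 / 4 := by
  rcases eq_or_ne x 0 with rfl | hx0
  · simp [cotRemainder]
  have hnum : |x * cos x - sin x + x ^ 2 / 3 * sin x| ≤ |x| ^ 5 / 8 := by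
    have hcoef : |x ^ 2 / 3 - 1| ≤ 1 := by
      rw [abs_le]; constructor <;> nlinarith [sq_abs x, abs_nonneg x]
    have hx5 : |x ^ 5 / 18| = |x| ^ 5 / 18 := by rw [abs_div, abs_pow]; norm_num
    -- the Taylor polynomials of `cos` and `sin` cancel up to `-x⁵/18`
    calc |x * cos x - sin x + x ^ 2 / 3 * sin x|
        = |x * (cos x - (1 - x ^ 2 / 2)) + (x ^ 2 / 3 - 1) * (sin x - (x - x ^ 3 / 6))
            - x ^ 5 / 18| := by ring_nf
      _ ≤ |x| * |cos x - (1 - x ^ 2 / 2)| + |x ^ 2 / 3 - 1| * |sin x - (x - x ^ 3 / 6)|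
            + |x ^ 5 / 18| := by
          rw [← abs_mul, ← abs_mul]; exact (abs_sub _ _).trans (by gcongr; exact abs_add_le _ _)
      _ ≤ |x| * (|x| ^ 4 * (5 / 96)) + 1 * (|x| ^ 5 / 100) + |x| ^ 5 / 18 := by
          rw [hx5]; gcongr
          exacts [cos_bound hx, sin_bound hx]
      _ ≤ |x| ^ 5 / 8 := by nlinarith [pow_nonneg (abs_nonneg x) 5]
  have hpos : 0 < x * sin x := (half_sq_le_mul_sin hx).trans_lt' (by positivity)
  have hsin : sin x ≠ 0 := right_ne_zero_of_mul hpos.ne'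
  have hid : cotRemainder x = (x * cos x - sin x + x ^ 2 / 3 * sin x) / (x * sin x) := by
    unfold cotRemainder; field_simp
  rw [hid, abs_div, abs_of_pos hpos, div_le_iff₀ hpos]
  calc _ ≤ |x| ^ 5 / 8 := hnum
    _ = |x| ^ 3 / 4 * (x ^ 2 / 2) := by rw [← sq_abs x]; ring
    _ ≤ |x| ^ 3 / 4 * (x * sin x) := by gcongr; exact half_sq_le_mul_sin hx

lemma cotRemainder_isBigO : cotRemainder =O[𝓝 0] fun x => x ^ 3 := by
  refine IsBigO.of_bound (1 / 4) ?_
  filter_upwards [Metric.closedBall_mem_nhds (0 : ℝ) one_pos] with x hx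
  rw [Metric.mem_closedBall, dist_zero_right, norm_eq_abs] at hx
  simpa [norm_eq_abs, abs_pow, div_eq_inv_mul, mul_comm] using abs_cotRemainder_le hx

lemma so_even_kernel_error_eq {θ n : ℝ} (hs : sin (θ * π / n) ≠ 0) :
    (1 - 1 / (2 * n) + sin ((2 * n - 1) * θ * π / n) / (2 * n * sin (θ * π / n)))
      - (1 + sin (2 * π * θ) / (2 * π * θ) - (1 + cos (2 * π * θ)) / (2 * n)
          - π * θ * sin (2 * π * θ) / (6 * n ^ 2))
      = sin (2 * π * θ) / (2 * n) * cotRemainder (θ * π / n) := by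
  have hn : n ≠ 0 := by rintro rfl; simp at hs
  have hθ : θ ≠ 0 := by rintro rfl; simp at hs
  have hangle : (2 * n - 1) * θ * π / n = 2 * π * θ - θ * π / n := by field_simp
  rw [hangle, sin_sub, cotRemainder, one_div_div, div_div]
  generalize θ * π / n = x at hs ⊢
  field_simp
  ring

theorem so_even_kernel_expansion_general (θ : ℝ) (h0 : 0 < θ) :
    (fun N : ℕ =>
      (1 - 1 / (2 * (N : ℝ))
        + Real.sin ((2 * (N : ℝ) - 1) * θ * π / N) / (2 * (N : ℝ) * Real.sin (θ * π / N)))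
      - (1 + Real.sin (2 * π * θ) / (2 * π * θ)
          - (1 + Real.cos (2 * π * θ)) / (2 * (N : ℝ))
          - π * θ * Real.sin (2 * π * θ) / (6 * (N : ℝ) ^ 2)))
      =O[atTop] (fun N : ℕ => 1 / (N : ℝ) ^ 3) := by
  have hx : Tendsto (fun N : ℕ => θ * π / N) atTop (𝓝 0) :=
    tendsto_const_div_atTop_nhds_zero_nat _
  have hsin : ∀ᶠ N : ℕ in atTop, sin (θ * π / N) ≠ 0 := by
    filter_upwards [hx.eventually (gt_mem_nhds pi_pos), eventually_ge_atTop 1] with N hN hN1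
    exact (sin_pos_of_pos_of_lt_pi (by positivity) hN).ne'
  have hprefactor : (fun N : ℕ => sin (2 * π * θ) / 2 / N) =O[atTop] fun _ => (1 : ℝ) :=
    (tendsto_const_div_atTop_nhds_zero_nat _).isBigO_one ℝ
  have hrem : (fun N : ℕ => cotRemainder (θ * π / N)) =O[atTop] fun N : ℕ => 1 / (N : ℝ) ^ 3 := by
    refine (cotRemainder_isBigO.comp_tendsto hx).trans ?_
    simpa only [Function.comp_def, div_pow, div_eq_mul_one_div ((θ * π) ^ 3)]
      using isBigO_const_mul_self ((θ * π) ^ 3) (fun N : ℕ => 1 / (N : ℝ) ^ 3) atTop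
  refine (hprefactor.mul hrem).congr' ?_ (.of_forall fun N => one_mul _)
  filter_upwards [hsin] with N hN
  rw [so_even_kernel_error_eq hN, div_div]

/-- Large-`N` expansion of the scaled one-level density kernel of `SO(2N)`. -/
theorem so_even_kernel_expansion (θ : ℝ) (h0 : 0 < θ) (h1 : θ < 1) :
    (fun N : ℕ =>
      (1 - 1 / (2 * (N : ℝ))
        + Real.sin ((2 * (N : ℝ) - 1) * θ * π / N) / (2 * (N : ℝ) * Real.sin (θ * π / N)))
      - (1 + Real.sin (2 * π * θ) / (2 * π * θ)
          - (1 + Real.cos (2 * π * θ)) / (2 * (N : ℝ))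
          - π * θ * Real.sin (2 * π * θ) / (6 * (N : ℝ) ^ 2)))
      =O[atTop] (fun N : ℕ => 1 / (N : ℝ) ^ 3) :=
  so_even_kernel_expansion_general θ h0
end

section
/- Fix a real number θ with 0 < θ < 1. Then, as N → ∞ through the positive integers, 1 − 1/(2N+1) − sin(4πθN/(2N+1))/((2N+1)·sin(2πθ/(2N+1))) = 1 − sin(2πθ)/(2πθ) − (1 − cos(2πθ))/(2N+1) + 2πθ·sin(2πθ)/(3(2N+1)²) + O(N^{−3}); that is, the difference between the left-hand side and the first four terms on the right is O(N^{−3}) as N → ∞, with implied constant allowed to depend on θ. -/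
open Real Filter Asymptotics

/-!
Write `a = 2πθ`, `M = 2N + 1` and `x = a / M`. Since `4πθN / M = a - x`, expanding
`sin (a - x)` reduces the difference of the two sides to
`-(sin a / a) · (x cos x - sin x + x² sin x / 3) / sin x`.
The Taylor expansion of the numerator has no `x³` term, so it is `O(x⁵)`; since
`sin x ≥ x / 2`, the difference is even `O(x⁴) = O(N⁻⁴)`.
-/

lemma abs_mul_cos_sub_sin_add_le {x : ℝ} (hx : |x| ≤ 1) :
    |x * cos x - sin x + x ^ 2 * sin x / 3| ≤ |x| ^ 5 := by
  have hc := cos_bound hx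
  have hs := sin_bound hx
  have hx0 := abs_nonneg x
  have hx2 : |x| ^ 2 ≤ 1 := pow_le_one₀ hx0 hx
  set e₁ := cos x - (1 - x ^ 2 / 2)
  set e₂ := sin x - (x - x ^ 3 / 6)
  have hid : x * cos x - sin x + x ^ 2 * sin x / 3
      = x * e₁ - e₂ + x ^ 2 * e₂ / 3 - x ^ 5 / 18 := by ring
  have h₁ : |x * e₁| ≤ |x| ^ 5 * (5 / 96) := by
    rw [abs_mul]
    nlinarith [abs_nonneg e₁]
  have h₂ : |x ^ 2 * e₂ / 3| ≤ |x| ^ 5 / 300 := by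
    rw [abs_div, abs_mul, abs_pow, abs_of_pos (three_pos : (0 : ℝ) < 3)]
    nlinarith [abs_nonneg e₂, pow_nonneg hx0 5]
  have h₅ : |x ^ 5 / 18| = |x| ^ 5 / 18 := by rw [abs_div, abs_pow]; norm_num
  rw [hid]
  calc _ ≤ |x * e₁| + |e₂| + |x ^ 2 * e₂ / 3| + |x ^ 5 / 18| :=
        (abs_sub _ _).trans (add_le_add_left ((abs_add_le _ _).trans
          (add_le_add_left (abs_sub _ _) _)) _)
    _ ≤ |x| ^ 5 := by linarith [pow_nonneg hx0 5]

lemma half_le_sin {x : ℝ} (hx0 : 0 < x) (hx1 : x ≤ 1) : x / 2 ≤ sin x := by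
  have hx3 : x ^ 3 ≤ x := by nlinarith [pow_le_one₀ (n := 2) hx0.le hx1]
  linarith [sin_gt_sub_cube hx0]

lemma abs_mul_cos_sub_sin_add_div_sin_le {x : ℝ} (hx0 : 0 < x) (hx1 : x ≤ 1) :
    |(x * cos x - sin x + x ^ 2 * sin x / 3) / sin x| ≤ 2 * x ^ 4 := by
  have hsin := half_le_sin hx0 hx1
  have hg := abs_mul_cos_sub_sin_add_le (x := x) (by rwa [abs_of_pos hx0])
  rw [abs_of_pos hx0] at hg
  rw [abs_div, abs_of_pos (a := sin x) (by linarith), div_le_iff₀ (by linarith)]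
  nlinarith [pow_pos hx0 4]

lemma abs_kernel_sub_expansion_le {a n : ℝ} (ha : 0 < a) (han : a ≤ 2 * n + 1) :
    |(1 - 1 / (2 * n + 1) - sin (2 * a * n / (2 * n + 1)) / ((2 * n + 1) * sin (a / (2 * n + 1))))
      - (1 - sin a / a - (1 - cos a) / (2 * n + 1) + a * sin a / (3 * (2 * n + 1) ^ 2))|
      ≤ 2 * a ^ 3 / (2 * n + 1) ^ 4 := by
  have hM : 0 < 2 * n + 1 := ha.trans_le han
  have hx0 : 0 < a / (2 * n + 1) := div_pos ha hM
  have hx1 : a / (2 * n + 1) ≤ 1 := (div_le_one hM).2 han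
  have hsin : sin (a / (2 * n + 1)) ≠ 0 :=
    (sin_pos_of_pos_of_lt_pi hx0 (hx1.trans_lt (by linarith [pi_gt_three]))).ne'
  have harg : 2 * a * n / (2 * n + 1) = a - a / (2 * n + 1) := by field_simp; ring
  set x := a / (2 * n + 1) with hx
  have hax : a = x * (2 * n + 1) := by rw [hx]; field_simp
  have hid : (1 - 1 / (2 * n + 1) - sin (2 * a * n / (2 * n + 1)) / ((2 * n + 1) * sin x))
      - (1 - sin a / a - (1 - cos a) / (2 * n + 1) + a * sin a / (3 * (2 * n + 1) ^ 2))
      = -(sin a / a) * ((x * cos x - sin x + x ^ 2 * sin x / 3) / sin x) := by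
    rw [harg, sin_sub]
    field_simp
    rw [hax]
    ring
  rw [hid, abs_mul, abs_neg, abs_div, abs_of_pos ha]
  calc |sin a| / a * |(x * cos x - sin x + x ^ 2 * sin x / 3) / sin x|
      ≤ 1 / a * (2 * x ^ 4) := by
        gcongr
        · exact abs_sin_le_one a
        · exact abs_mul_cos_sub_sin_add_div_sin_le hx0 hx1
    _ = 2 * a ^ 3 / (2 * n + 1) ^ 4 := by rw [hx]; field_simp

theorem so_odd_kernel_expansion_general (θ : ℝ) (h0 : 0 < θ) :
    (fun N : ℕ =>
      (1 - 1 / (2 * (N : ℝ) + 1)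
        - Real.sin (4 * π * θ * N / (2 * (N : ℝ) + 1))
            / ((2 * (N : ℝ) + 1) * Real.sin (2 * π * θ / (2 * (N : ℝ) + 1))))
      - (1 - Real.sin (2 * π * θ) / (2 * π * θ)
          - (1 - Real.cos (2 * π * θ)) / (2 * (N : ℝ) + 1)
          + 2 * π * θ * Real.sin (2 * π * θ) / (3 * (2 * (N : ℝ) + 1) ^ 2)))
      =O[atTop] (fun N : ℕ => 1 / (N : ℝ) ^ 3) := by
  have ha : 0 < 2 * π * θ := by positivity
  rw [show 4 * π * θ = 2 * (2 * π * θ) by ring]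
  refine isBigO_iff.2 ⟨(2 * π * θ) ^ 3, ?_⟩
  filter_upwards [eventually_ge_atTop ⌈2 * π * θ⌉₊, eventually_gt_atTop 0] with N haN hN
  have hN : (0 : ℝ) < N := by exact_mod_cast hN
  have haN : 2 * π * θ ≤ N := Nat.ceil_le.1 haN
  rw [norm_eq_abs, norm_of_nonneg (by positivity), mul_one_div]
  refine (abs_kernel_sub_expansion_le ha (by linarith)).trans ?_
  rw [div_le_div_iff₀ (by positivity) (by positivity)]
  have hM : 2 * (N : ℝ) ^ 3 ≤ (2 * N + 1) ^ 4 := by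
    nlinarith [pow_pos hN 2, pow_pos hN 3, pow_pos hN 4]
  nlinarith [pow_pos ha 3]

/-- Large-`N` expansion of the scaled one-level density kernel of `SO(2N+1)`. -/
theorem so_odd_kernel_expansion (θ : ℝ) (h0 : 0 < θ) (h1 : θ < 1) :
    (fun N : ℕ =>
      (1 - 1 / (2 * (N : ℝ) + 1)
        - Real.sin (4 * π * θ * N / (2 * (N : ℝ) + 1))
            / ((2 * (N : ℝ) + 1) * Real.sin (2 * π * θ / (2 * (N : ℝ) + 1))))
      - (1 - Real.sin (2 * π * θ) / (2 * π * θ)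
          - (1 - Real.cos (2 * π * θ)) / (2 * (N : ℝ) + 1)
          + 2 * π * θ * Real.sin (2 * π * θ) / (3 * (2 * (N : ℝ) + 1) ^ 2)))
      =O[atTop] (fun N : ℕ => 1 / (N : ℝ) ^ 3) :=
  so_odd_kernel_expansion_general θ h0
end

section
/- Fix a real number θ with 0 < θ < 1. Then, as N → ∞ through the positive integers, 1 + 1/(2N) − sin((2N+1)θπ/N)/(2N·sin(θπ/N)) = 1 − sin(2πθ)/(2πθ) + (1 − cos(2πθ))/(2N) + πθ·sin(2πθ)/(6N²) + O(N^{−3}); that is, the difference between the left-hand side and the first four terms on the right is O(N^{−3}) as N → ∞, with implied constant allowed to depend on θ. -/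
/-!
Put `x = θπ/N`. Since `(2N+1)θπ/N = 2πθ + x` and `2N = 2πθ/x`, the addition formula for `sin`
turns the difference of the two sides into `-(sin 2πθ / 2πθ) · (x cot x - 1 + x²/3)` exactly.
The Taylor bounds for `sin` and `cos` give `x cot x = 1 - x²/3 + O(x⁴)` as `x → 0⁺`, so the
difference is even `O(N⁻⁴)`.
-/

open Real Filter Asymptotics Topology

lemma abs_mul_cos_sub_mul_sin_le {x : ℝ} (hx : |x| ≤ 1) :
    |x * cos x - (1 - x ^ 2 / 3) * sin x| ≤ |x| ^ 5 := by
  have hx0 : 0 ≤ |x| := abs_nonneg x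
  have hcoef : |1 - x ^ 2 / 3| ≤ 1 := by
    rw [abs_le]; constructor <;> nlinarith [sq_abs x, abs_le.mp hx]
  have hsplit : x * cos x - (1 - x ^ 2 / 3) * sin x
      = x * (cos x - (1 - x ^ 2 / 2)) - (1 - x ^ 2 / 3) * (sin x - (x - x ^ 3 / 6))
        - x ^ 5 / 18 := by ring
  calc |x * cos x - (1 - x ^ 2 / 3) * sin x|
      ≤ |x| * |cos x - (1 - x ^ 2 / 2)| + |1 - x ^ 2 / 3| * |sin x - (x - x ^ 3 / 6)|
        + |x| ^ 5 / 18 := by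
        rw [hsplit, ← abs_mul, ← abs_mul]
        refine (abs_sub _ _).trans (add_le_add (abs_sub _ _) (le_of_eq ?_))
        rw [abs_div, abs_pow]; norm_num
    _ ≤ |x| * (|x| ^ 4 * (5 / 96)) + 1 * (|x| ^ 5 / 100) + |x| ^ 5 / 18 := by
        gcongr
        exacts [cos_bound hx, sin_bound hx]
    _ ≤ |x| ^ 5 := by nlinarith [pow_nonneg hx0 5]

lemma isBigO_mul_cot_sub :
    (fun x : ℝ => x * cos x / sin x - (1 - x ^ 2 / 3)) =O[𝓝[>] 0] (fun x => x ^ 4) := by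
  refine isBigO_iff.mpr ⟨2, ?_⟩
  filter_upwards [Ioo_mem_nhdsGT (zero_lt_one' ℝ)] with x ⟨hx0, hx1⟩
  have hsin : x / 2 ≤ sin x := by
    have := mul_le_sin hx0.le (by linarith [pi_gt_three])
    have : x / 2 ≤ 2 / π * x := by
      rw [div_mul_eq_mul_div, div_le_div_iff₀ two_pos pi_pos]
      nlinarith [pi_le_four]
    linarith
  have hsin0 : 0 < sin x := by linarith
  have hrem := abs_mul_cos_sub_mul_sin_le (x := x) (by rw [abs_of_pos hx0]; exact hx1.le)
  rw [abs_of_pos hx0] at hrem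
  rw [Real.norm_eq_abs, Real.norm_eq_abs, abs_pow, abs_of_pos hx0]
  calc |x * cos x / sin x - (1 - x ^ 2 / 3)|
      = |x * cos x - (1 - x ^ 2 / 3) * sin x| / sin x := by
        rw [← abs_of_pos hsin0, ← abs_div, abs_of_pos hsin0, sub_div,
          mul_div_cancel_right₀ _ hsin0.ne']
    _ ≤ x ^ 5 / (x / 2) := div_le_div₀ (by positivity) hrem (by positivity) hsin
    _ = 2 * x ^ 4 := by field_simp

lemma usp_kernel_sub_eq {θ n : ℝ} (hθ : θ ≠ 0) (hn : n ≠ 0)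
    (hsin : sin (θ * π / n) ≠ 0) :
    (1 + 1 / (2 * n) - sin ((2 * n + 1) * θ * π / n) / (2 * n * sin (θ * π / n)))
      - (1 - sin (2 * π * θ) / (2 * π * θ) + (1 - cos (2 * π * θ)) / (2 * n)
          + π * θ * sin (2 * π * θ) / (6 * n ^ 2))
      = -(sin (2 * π * θ) / (2 * π * θ))
          * (θ * π / n * cos (θ * π / n) / sin (θ * π / n) - (1 - (θ * π / n) ^ 2 / 3)) := by
  have harg : (2 * n + 1) * θ * π / n = 2 * π * θ + θ * π / n := by field_simp
  rw [harg, sin_add]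
  generalize sin (θ * π / n) = s at hsin ⊢
  generalize cos (θ * π / n) = c
  field_simp
  ring

lemma isBigO_const_div_pow_one_div_pow (c : ℝ) {k m : ℕ} (hmk : m ≤ k) :
    (fun N : ℕ => (c / N) ^ k) =O[atTop] (fun N : ℕ => 1 / (N : ℝ) ^ m) := by
  refine isBigO_iff.mpr ⟨|c| ^ k, ?_⟩
  filter_upwards [eventually_ge_atTop 1] with N hN
  have hN : (1 : ℝ) ≤ N := by exact_mod_cast hN
  rw [Real.norm_eq_abs, Real.norm_eq_abs, div_pow, abs_div, abs_pow, abs_pow, Nat.abs_cast,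
    abs_of_pos (by positivity : (0 : ℝ) < 1 / (N : ℝ) ^ m), mul_one_div]
  gcongr

theorem usp_kernel_expansion_general (θ : ℝ) (h0 : 0 < θ) :
    (fun N : ℕ =>
      (1 + 1 / (2 * (N : ℝ))
        - Real.sin ((2 * (N : ℝ) + 1) * θ * π / N) / (2 * (N : ℝ) * Real.sin (θ * π / N)))
      - (1 - Real.sin (2 * π * θ) / (2 * π * θ)
          + (1 - Real.cos (2 * π * θ)) / (2 * (N : ℝ))
          + π * θ * Real.sin (2 * π * θ) / (6 * (N : ℝ) ^ 2)))
      =O[atTop] (fun N : ℕ => 1 / (N : ℝ) ^ 3) := by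
  have hc : 0 < θ * π := by positivity
  have hx : Tendsto (fun N : ℕ => θ * π / N) atTop (𝓝[>] 0) :=
    tendsto_nhdsWithin_of_tendsto_nhds_of_eventually_within _
      (tendsto_const_div_atTop_nhds_zero_nat _)
      (eventually_gt_atTop 0 |>.mono fun N hN => div_pos hc (Nat.cast_pos.mpr hN))
  have hsin : ∀ᶠ N : ℕ in atTop, sin (θ * π / N) ≠ 0 :=
    (hx.eventually (Ioo_mem_nhdsGT pi_pos)).mono fun N hN => (sin_pos_of_mem_Ioo hN).ne'
  have hrem := (isBigO_mul_cot_sub.comp_tendsto hx).const_mul_left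
    (-(sin (2 * π * θ) / (2 * π * θ)))
  refine (hrem.congr' ?_ EventuallyEq.rfl).trans
    (isBigO_const_div_pow_one_div_pow _ (by norm_num : 3 ≤ 4))
  filter_upwards [hsin, eventually_gt_atTop 0] with N hN hN0
  exact (usp_kernel_sub_eq h0.ne' (Nat.cast_pos.mpr hN0).ne' hN).symm

/-- Large-`N` expansion of the scaled one-level density kernel of `USp(2N)`. -/
theorem usp_kernel_expansion (θ : ℝ) (h0 : 0 < θ) (h1 : θ < 1) :
    (fun N : ℕ =>
      (1 + 1 / (2 * (N : ℝ))
        - Real.sin ((2 * (N : ℝ) + 1) * θ * π / N) / (2 * (N : ℝ) * Real.sin (θ * π / N)))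
      - (1 - Real.sin (2 * π * θ) / (2 * π * θ)
          + (1 - Real.cos (2 * π * θ)) / (2 * (N : ℝ))
          + π * θ * Real.sin (2 * π * θ) / (6 * (N : ℝ) ^ 2)))
      =O[atTop] (fun N : ℕ => 1 / (N : ℝ) ^ 3) :=
  usp_kernel_expansion_general θ h0
end

section
/- Let S be a set of positive integers whose counting function N_S(X) = #{d ∈ S : d ≤ X} satisfies N_S(X) = cX + O(X^{1/2}) for some constant c > 0, let A > 0 be a real constant, and fix τ ∈ ℝ. For X large enough that R := log(A·X) > 0, one has Σ_{d ∈ S, d ≤ X} (A·d)^{−2πiτ/R} = N_S(X)·(1 − 2πiτ/R)^{−1}·e^{−2πiτ} + O(X^{1/2}) as X → ∞, with implied constant allowed to depend on τ, A, and S. -/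
open Real Filter Asymptotics Complex

/-!
Put `s = -2πiτ/R`. It is purely imaginary with `‖s‖ ≤ 2π|τ|` once `R ≥ 1`, so
`(A d)^s = A^s d^s` with `‖A^s‖ = 1`, and `(A X)^s = e^{-2πiτ}`. Abel summation against the
counting function `N(t) = c t + E(t)`, `|E(t)| ≪ √t`, gives
`∑ d^s = N(X) X^s - c s ∫₁^X t^s dt - s ∫₁^X t^{s-1} E(t) dt`
with `∫₁^X t^s dt = (X^{1+s} - 1)/(1+s)`. Subtracting `N(X) X^s/(1+s)` leaves
`s/(1+s) · X^s (N(X) - cX)`, the constant `c s/(1+s)` and the error integral; since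
`‖1+s‖ ≥ 1`, each is `O(‖s‖ √X)`.
-/

open Finset MeasureTheory

namespace Complex

theorem norm_ofReal_cpow_of_re_eq_zero {x : ℝ} (hx : 0 < x) {s : ℂ} (hs : s.re = 0) :
    ‖(x : ℂ) ^ s‖ = 1 := by
  rw [norm_cpow_eq_rpow_re_of_pos hx, hs, Real.rpow_zero]

theorem norm_inv_one_add_le_one_of_re_nonneg {s : ℂ} (hs : 0 ≤ s.re) : ‖(1 + s)⁻¹‖ ≤ 1 := by
  rw [norm_inv]
  refine inv_le_one_of_one_le₀ (le_trans ?_ (re_le_norm (1 + s)))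
  simpa using hs

theorem ofReal_cpow_div_log {x : ℝ} (hx : 0 < x) (hlog : Real.log x ≠ 0) (w : ℂ) :
    (x : ℂ) ^ (w / Real.log x) = exp w := by
  rw [cpow_def_of_ne_zero (ofReal_ne_zero.mpr hx.ne'), ← ofReal_log hx.le,
    mul_div_cancel₀ _ (ofReal_ne_zero.mpr hlog)]

end Complex

theorem hasDerivAt_ofReal_cpow_const_of_pos {x : ℝ} (hx : 0 < x) (s : ℂ) :
    HasDerivAt (fun t : ℝ => (t : ℂ) ^ s) (s * (x : ℂ) ^ s / x) x := by
  have hx' : (x : ℂ) ≠ 0 := ofReal_ne_zero.mpr hx.ne'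
  convert ((hasDerivAt_id (x : ℂ)).cpow_const (c := s)
    (ofReal_mem_slitPlane.mpr hx)).comp_ofReal using 1
  · rfl
  rw [id, cpow_sub _ _ hx', cpow_one, mul_one, mul_div_assoc]

theorem norm_setIntegral_Ioc_le_of_norm_le_rpow_neg_half {g : ℝ → ℂ} {K x : ℝ} (hK : 0 ≤ K)
    (hx : 1 ≤ x) (hg : ∀ t ∈ Set.Ioc 1 x, ‖g t‖ ≤ K * t ^ (-(1 : ℝ) / 2)) :
    ‖∫ t in Set.Ioc 1 x, g t‖ ≤ 2 * K * x ^ ((1 : ℝ) / 2) := by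
  have hbound_int : IntegrableOn (fun t : ℝ => K * t ^ (-(1 : ℝ) / 2)) (Set.Ioc 1 x) :=
    (continuousOn_const.mul (continuousOn_id.rpow_const fun t ht =>
      Or.inl (zero_lt_one.trans_le ht.1).ne')).integrableOn_Icc.mono_set Set.Ioc_subset_Icc_self
  calc ‖∫ t in Set.Ioc 1 x, g t‖
      ≤ ∫ t in Set.Ioc 1 x, K * t ^ (-(1 : ℝ) / 2) :=
        norm_integral_le_of_norm_le hbound_int
          ((ae_restrict_iff' measurableSet_Ioc).mpr (.of_forall hg))
    _ = 2 * K * (x ^ ((1 : ℝ) / 2) - 1) := by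
        rw [← intervalIntegral.integral_of_le hx, intervalIntegral.integral_const_mul,
          integral_rpow (Or.inl (by norm_num))]
        norm_num
        ring
    _ ≤ 2 * K * x ^ ((1 : ℝ) / 2) := by
        gcongr
        linarith

theorem norm_comp_floor_sub_mul_le {P : ℕ → ℂ} {c : ℂ} {C : ℝ} (hC : 0 ≤ C)
    (hP : ∀ n : ℕ, ‖P n - c * n‖ ≤ C * (n : ℝ) ^ ((1 : ℝ) / 2)) {t : ℝ} (ht : 1 ≤ t) :
    ‖P ⌊t⌋₊ - c * t‖ ≤ (C + ‖c‖) * t ^ ((1 : ℝ) / 2) := by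
  have hfloor : (⌊t⌋₊ : ℝ) ≤ t := Nat.floor_le (zero_le_one.trans ht)
  have hone_le : 1 ≤ t ^ ((1 : ℝ) / 2) := Real.one_le_rpow ht (by norm_num)
  have hfrac : ‖c * (⌊t⌋₊ - t : ℝ)‖ ≤ ‖c‖ := by
    rw [norm_mul, norm_real, Real.norm_eq_abs, abs_of_nonpos (by linarith)]
    exact mul_le_of_le_one_right (norm_nonneg c) (by linarith [Nat.lt_floor_add_one t])
  calc ‖P ⌊t⌋₊ - c * t‖ = ‖(P ⌊t⌋₊ - c * ⌊t⌋₊) + c * (⌊t⌋₊ - t : ℝ)‖ := by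
        push_cast; ring_nf
    _ ≤ C * (⌊t⌋₊ : ℝ) ^ ((1 : ℝ) / 2) + ‖c‖ := norm_add_le_of_le (hP _) hfrac
    _ ≤ C * t ^ ((1 : ℝ) / 2) + ‖c‖ * t ^ ((1 : ℝ) / 2) := by
        gcongr
        exact le_mul_of_one_le_right (norm_nonneg c) hone_le
    _ = (C + ‖c‖) * t ^ ((1 : ℝ) / 2) := by ring

theorem continuousOn_deriv_ofReal_cpow_const (s : ℂ) :
    ContinuousOn (deriv fun t : ℝ => (t : ℂ) ^ s) (Set.Ioi 0) := by
  refine ContinuousOn.congr ?_ fun t ht =>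
    (hasDerivAt_ofReal_cpow_const_of_pos ht s).deriv
  refine (continuousOn_const.mul fun t ht => ?_).div continuous_ofReal.continuousOn
    fun t ht => ofReal_ne_zero.mpr (ne_of_gt ht)
  exact (continuousAt_ofReal_cpow_const t s (Or.inr (ne_of_gt ht))).continuousWithinAt

theorem setIntegral_Ioc_deriv_ofReal_cpow_mul_ofReal {s : ℂ} (hs : -1 < s.re) {x : ℝ}
    (hx : 1 ≤ x) :
    ∫ t in Set.Ioc 1 x, deriv (fun t : ℝ => (t : ℂ) ^ s) t * t =
      s * ((x : ℂ) ^ (1 + s) - 1) / (1 + s) := by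
  calc ∫ t in Set.Ioc 1 x, deriv (fun t : ℝ => (t : ℂ) ^ s) t * t
      = ∫ t in Set.Ioc 1 x, s * (t : ℂ) ^ s :=
        setIntegral_congr_fun measurableSet_Ioc fun t ht => by
          have ht0 : (t : ℂ) ≠ 0 := ofReal_ne_zero.mpr (zero_lt_one.trans ht.1).ne'
          rw [(hasDerivAt_ofReal_cpow_const_of_pos (zero_lt_one.trans ht.1) s).deriv]
          field_simp
    _ = s * ∫ t in (1 : ℝ)..x, (t : ℂ) ^ s := by
        rw [integral_const_mul, intervalIntegral.integral_of_le hx]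
    _ = s * ((x : ℂ) ^ (1 + s) - 1) / (1 + s) := by
        rw [integral_cpow (Or.inl hs), ofReal_one, one_cpow, add_comm s, mul_div_assoc]

theorem sum_mul_eq_sub_integral_mul_id_sub_integral_mul_remainder {a : ℕ → ℂ} (ha0 : a 0 = 0)
    (c : ℂ) {f : ℝ → ℂ} {X : ℕ} (hf_diff : ∀ t ∈ Set.Icc (1 : ℝ) X, DifferentiableAt ℝ f t)
    (hf' : ContinuousOn (deriv f) (Set.Icc 1 X)) :
    ∑ k ∈ Icc 0 X, f k * a k =
      f X * ∑ k ∈ Icc 0 X, a k - c * (∫ t in Set.Ioc (1 : ℝ) X, deriv f t * t) -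
        ∫ t in Set.Ioc (1 : ℝ) X, deriv f t * (∑ k ∈ Icc 0 ⌊t⌋₊, a k - c * t) := by
  have hint : IntegrableOn (fun t => deriv f t * ∑ k ∈ Icc 0 ⌊t⌋₊, a k) (Set.Ioc 1 X) :=
    (integrableOn_mul_sum_Icc a zero_le_one hf'.integrableOn_Icc).mono_set
      Set.Ioc_subset_Icc_self
  have hint_main : IntegrableOn (fun t => deriv f t * (c * t)) (Set.Ioc 1 X) :=
    (hf'.mul (by fun_prop)).integrableOn_Icc.mono_set Set.Ioc_subset_Icc_self
  have hmain : c * ∫ t in Set.Ioc (1 : ℝ) X, deriv f t * t =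
      ∫ t in Set.Ioc (1 : ℝ) X, deriv f t * (c * t) := by
    rw [← integral_const_mul]
    simp only [mul_left_comm c]
  simp only [mul_sub]
  rw [sum_mul_eq_sub_integral_mul₀' a ha0 X hf_diff hf'.integrableOn_Icc,
    integral_sub hint hint_main, hmain]
  ring

theorem norm_integral_deriv_ofReal_cpow_mul_remainder_le {s : ℂ} (hs : s.re = 0) {P : ℕ → ℂ}
    {c : ℂ} {C : ℝ} (hC : 0 ≤ C) (hP : ∀ n : ℕ, ‖P n - c * n‖ ≤ C * (n : ℝ) ^ ((1 : ℝ) / 2))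
    {x : ℝ} (hx : 1 ≤ x) :
    ‖∫ t in Set.Ioc 1 x, deriv (fun t : ℝ => (t : ℂ) ^ s) t * (P ⌊t⌋₊ - c * t)‖ ≤
      2 * (‖s‖ * (C + ‖c‖)) * x ^ ((1 : ℝ) / 2) := by
  refine norm_setIntegral_Ioc_le_of_norm_le_rpow_neg_half (by positivity) hx fun t ht => ?_
  have ht0 : 0 < t := zero_lt_one.trans ht.1
  rw [(hasDerivAt_ofReal_cpow_const_of_pos ht0 s).deriv, norm_mul, norm_div, norm_mul,
    norm_ofReal_cpow_of_re_eq_zero ht0 hs, norm_real, Real.norm_of_nonneg ht0.le, mul_one,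
    show -(1 : ℝ) / 2 = 1 / 2 - 1 by norm_num, Real.rpow_sub_one ht0.ne']
  calc ‖s‖ / t * ‖P ⌊t⌋₊ - c * t‖ ≤ ‖s‖ / t * ((C + ‖c‖) * t ^ ((1 : ℝ) / 2)) := by
        gcongr
        exact norm_comp_floor_sub_mul_le hC hP ht.1.le
    _ = ‖s‖ * (C + ‖c‖) * (t ^ ((1 : ℝ) / 2) / t) := by ring

theorem norm_sum_cpow_mul_sub_le {s : ℂ} (hs : s.re = 0) {a : ℕ → ℂ} (ha0 : a 0 = 0) {c : ℂ}
    {C : ℝ} (hP : ∀ n : ℕ, ‖∑ k ∈ Icc 0 n, a k - c * n‖ ≤ C * (n : ℝ) ^ ((1 : ℝ) / 2))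
    {X : ℕ} (hX : 1 ≤ X) :
    ‖∑ k ∈ Icc 0 X, (k : ℂ) ^ s * a k - (∑ k ∈ Icc 0 X, a k) * (X : ℂ) ^ s / (1 + s)‖
      ≤ 3 * ‖s‖ * (C + ‖c‖) * (X : ℝ) ^ ((1 : ℝ) / 2) := by
  set P : ℕ → ℂ := fun n => ∑ k ∈ Icc 0 n, a k
  set remainder := ∫ t in Set.Ioc (1 : ℝ) X, deriv (fun t : ℝ => (t : ℂ) ^ s) t * (P ⌊t⌋₊ - c * t)
  have hC : 0 ≤ C := by simpa using (norm_nonneg _).trans (hP 1)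
  have hX' : (1 : ℝ) ≤ X := by exact_mod_cast hX
  have hX0 : (X : ℂ) ≠ 0 := by norm_cast; omega
  have hs1 : 1 + s ≠ 0 := fun h => by simpa [hs] using congrArg re h
  have habel := sum_mul_eq_sub_integral_mul_id_sub_integral_mul_remainder ha0 c (X := X)
    (fun t ht => (hasDerivAt_ofReal_cpow_const_of_pos (zero_lt_one.trans_le ht.1)
      s).differentiableAt)
    ((continuousOn_deriv_ofReal_cpow_const s).mono fun t ht => zero_lt_one.trans_le ht.1)
  rw [setIntegral_Ioc_deriv_ofReal_cpow_mul_ofReal (by simp [hs]) hX'] at habel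
  simp only [ofReal_natCast] at habel
  have hidentity : ∑ k ∈ Icc 0 X, (k : ℂ) ^ s * a k - P X * (X : ℂ) ^ s / (1 + s) =
      s / (1 + s) * (X : ℂ) ^ s * (P X - c * X) + c * (s / (1 + s)) - remainder := by
    rw [habel, cpow_add _ _ hX0, cpow_one]
    field_simp
    ring
  have hratio : ‖s / (1 + s)‖ ≤ ‖s‖ := by
    rw [div_eq_mul_inv, norm_mul]
    exact mul_le_of_le_one_right (norm_nonneg s) (norm_inv_one_add_le_one_of_re_nonneg hs.ge)
  have hXs : ‖(X : ℂ) ^ s‖ = 1 := by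
    exact_mod_cast norm_ofReal_cpow_of_re_eq_zero (x := X) (by positivity) hs
  have hsqrt : 1 ≤ (X : ℝ) ^ ((1 : ℝ) / 2) := Real.one_le_rpow hX' (by norm_num)
  rw [hidentity]
  calc _ ≤ ‖s / (1 + s)‖ * ‖(X : ℂ) ^ s‖ * ‖P X - c * X‖ + ‖c‖ * ‖s / (1 + s)‖ +
          ‖remainder‖ := by
        rw [← norm_mul, ← norm_mul, ← norm_mul]
        exact norm_sub_le_of_le (norm_add_le _ _) le_rfl
    _ ≤ ‖s‖ * 1 * (C * (X : ℝ) ^ ((1 : ℝ) / 2)) + ‖c‖ * (‖s‖ * (X : ℝ) ^ ((1 : ℝ) / 2)) +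
          2 * (‖s‖ * (C + ‖c‖)) * (X : ℝ) ^ ((1 : ℝ) / 2) := by
        rw [hXs]
        gcongr
        · exact hP X
        · exact hratio.trans (le_mul_of_one_le_right (norm_nonneg s) hsqrt)
        · exact norm_integral_deriv_ofReal_cpow_mul_remainder_le hs hC hP hX'
    _ = 3 * ‖s‖ * (C + ‖c‖) * (X : ℝ) ^ ((1 : ℝ) / 2) := by ring

theorem sum_filter_Icc_one_eq_sum_Icc_zero_mul_ite {M : Type*} [NonAssocSemiring M] (S : Set ℕ)
    [DecidablePred (· ∈ S)] (g : ℕ → M) (n : ℕ) :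
    ∑ d ∈ (Icc 1 n).filter (· ∈ S), g d =
      ∑ k ∈ Icc 0 n, g k * if 1 ≤ k ∧ k ∈ S then 1 else 0 := by
  simp only [mul_ite, mul_one, mul_zero]
  rw [← sum_filter]
  congr 1
  ext k
  simp only [mem_filter, mem_Icc, Nat.zero_le, true_and]
  tauto

theorem norm_sum_filter_cpow_sub_le (S : Set ℕ) [DecidablePred (· ∈ S)] {c C : ℝ}
    (hcount : ∀ n : ℕ,
      |(((Icc 1 n).filter (· ∈ S)).card : ℝ) - c * n| ≤ C * (n : ℝ) ^ ((1 : ℝ) / 2))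
    {A : ℝ} (hA : 0 < A) {s : ℂ} (hs : s.re = 0) {X : ℕ} (hX : 1 ≤ X) :
    ‖∑ d ∈ (Icc 1 X).filter (· ∈ S), ((A * d : ℝ) : ℂ) ^ s -
        (((Icc 1 X).filter (· ∈ S)).card : ℂ) * ((A * X : ℝ) : ℂ) ^ s / (1 + s)‖
      ≤ 3 * ‖s‖ * (C + |c|) * (X : ℝ) ^ ((1 : ℝ) / 2) := by
  set a : ℕ → ℂ := fun k => if 1 ≤ k ∧ k ∈ S then 1 else 0
  have hcard : ∀ n, (((Icc 1 n).filter (· ∈ S)).card : ℂ) = ∑ k ∈ Icc 0 n, a k := fun n => by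
    rw [card_eq_sum_ones, Nat.cast_sum, sum_filter_Icc_one_eq_sum_Icc_zero_mul_ite]
    simp only [Nat.cast_one, one_mul, a]
  have hP : ∀ n : ℕ, ‖∑ k ∈ Icc 0 n, a k - (c : ℂ) * n‖ ≤ C * (n : ℝ) ^ ((1 : ℝ) / 2) := by
    intro n
    have := hcount n
    rw [← Real.norm_eq_abs, ← norm_real] at this
    push_cast at this
    rwa [← hcard]
  have hpow : ∀ x : ℝ, 0 ≤ x → ((A * x : ℝ) : ℂ) ^ s = (A : ℂ) ^ s * (x : ℂ) ^ s := fun x hx =>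
    by rw [ofReal_mul, mul_cpow_ofReal_nonneg hA.le hx]
  have hexpr : ∑ d ∈ (Icc 1 X).filter (· ∈ S), ((A * d : ℝ) : ℂ) ^ s -
        (((Icc 1 X).filter (· ∈ S)).card : ℂ) * ((A * X : ℝ) : ℂ) ^ s / (1 + s) =
      (A : ℂ) ^ s * (∑ k ∈ Icc 0 X, (k : ℂ) ^ s * a k -
        (∑ k ∈ Icc 0 X, a k) * (X : ℂ) ^ s / (1 + s)) := by
    rw [sum_filter_Icc_one_eq_sum_Icc_zero_mul_ite, hcard, hpow _ (Nat.cast_nonneg X), mul_sub,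
      mul_sum]
    simp only [hpow _ (Nat.cast_nonneg _), ofReal_natCast, a]
    ring_nf
  rw [hexpr, norm_mul, norm_ofReal_cpow_of_re_eq_zero hA hs, one_mul, ← Real.norm_eq_abs,
    ← norm_real]
  exact norm_sum_cpow_mul_sub_le hs (by simp [a]) hP hX

theorem exists_forall_abs_le_mul_rpow_of_isBigO {f : ℕ → ℝ} {p : ℝ} (hp : 0 < p) (hf0 : f 0 = 0)
    (hf : f =O[atTop] fun n : ℕ => (n : ℝ) ^ p) :
    ∃ C, 0 ≤ C ∧ ∀ n : ℕ, |f n| ≤ C * (n : ℝ) ^ p := by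
  have hzero : ∀ n : ℕ, (n : ℝ) ^ p = 0 → f n = 0 := fun n hn => by
    obtain rfl : n = 0 := by exact_mod_cast (Real.rpow_eq_zero (Nat.cast_nonneg n) hp.ne').mp hn
    exact hf0
  obtain ⟨C, hC⟩ := (isBigO_nat_atTop_iff hzero).mp hf
  refine ⟨max C 0, le_max_right C 0, fun n => ?_⟩
  have hpow : 0 ≤ (n : ℝ) ^ p := Real.rpow_nonneg (Nat.cast_nonneg n) p
  rw [← Real.norm_eq_abs]
  refine (hC n).trans ?_
  rw [Real.norm_of_nonneg hpow]
  gcongr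
  exact le_max_left C 0

theorem sum_power_over_family_general (S : Set ℕ) [DecidablePred (· ∈ S)]
    (c : ℝ)
    (hcount : (fun X : ℕ =>
        ((((Finset.Icc 1 X).filter (· ∈ S)).card : ℝ) - c * X))
      =O[atTop] (fun X : ℕ => (X : ℝ) ^ ((1 : ℝ) / 2)))
    (A : ℝ) (hA : 0 < A) (τ : ℝ) :
    (fun X : ℕ =>
      (∑ d ∈ (Finset.Icc 1 X).filter (· ∈ S),
          ((A * (d : ℝ) : ℝ) : ℂ)
            ^ (-(2 * (π : ℂ) * Complex.I * (τ : ℂ)) / ((Real.log (A * X) : ℝ) : ℂ)))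
        - (((Finset.Icc 1 X).filter (· ∈ S)).card : ℂ)
            * (1 - 2 * (π : ℂ) * Complex.I * (τ : ℂ) / ((Real.log (A * X) : ℝ) : ℂ))⁻¹
            * Complex.exp (-(2 * (π : ℂ) * Complex.I * (τ : ℂ))))
      =O[atTop] (fun X : ℕ => (X : ℝ) ^ ((1 : ℝ) / 2)) := by
  obtain ⟨C, hC, hbound⟩ := exists_forall_abs_le_mul_rpow_of_isBigO one_half_pos (by simp) hcount
  have hlog : Tendsto (fun X : ℕ => Real.log (A * X)) atTop atTop :=
    Real.tendsto_log_atTop.comp (tendsto_natCast_atTop_atTop.const_mul_atTop hA)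
  refine isBigO_iff.mpr ⟨3 * (2 * π * |τ|) * (C + |c|), ?_⟩
  filter_upwards [eventually_ge_atTop 1, hlog.eventually_ge_atTop 1] with X hX hR
  set s : ℂ := -(2 * π * I * τ) / (Real.log (A * X) : ℂ) with hs_def
  have hs : s.re = 0 := by simp [s]
  have hs_norm : ‖s‖ ≤ 2 * π * |τ| := by
    rw [norm_div, norm_real, Real.norm_of_nonneg (zero_le_one.trans hR)]
    refine div_le_self (by positivity) hR |>.trans_eq ?_
    simp [abs_of_pos pi_pos]
  have hmain : (1 - 2 * π * I * τ / (Real.log (A * X) : ℂ))⁻¹ * exp (-(2 * π * I * τ)) =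
      ((A * X : ℝ) : ℂ) ^ s / (1 + s) := by
    rw [Complex.ofReal_cpow_div_log (mul_pos hA (by exact_mod_cast hX))
      (zero_lt_one.trans_le hR).ne', hs_def, neg_div]
    ring
  rw [Real.norm_of_nonneg (Real.rpow_nonneg (Nat.cast_nonneg X) _), mul_assoc, hmain,
    ← mul_div_assoc]
  calc _ ≤ 3 * ‖s‖ * (C + |c|) * (X : ℝ) ^ ((1 : ℝ) / 2) :=
        norm_sum_filter_cpow_sub_le S hbound hA hs hX
    _ ≤ 3 * (2 * π * |τ|) * (C + |c|) * (X : ℝ) ^ ((1 : ℝ) / 2) := by gcongr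

/-- Summation by parts: if `#{d ∈ S : d ≤ X} = cX + O(X^{1/2})`, then for
`R = log (A X)`,
`∑_{d ∈ S, d ≤ X} (A d)^{-2πiτ/R} = N_S(X) (1 - 2πiτ/R)⁻¹ e^{-2πiτ} + O(X^{1/2})`. -/
theorem sum_power_over_family (S : Set ℕ) [DecidablePred (· ∈ S)] (hS0 : 0 ∉ S)
    (c : ℝ) (hc : 0 < c)
    (hcount : (fun X : ℕ =>
        ((((Finset.Icc 1 X).filter (· ∈ S)).card : ℝ) - c * X))
      =O[atTop] (fun X : ℕ => (X : ℝ) ^ ((1 : ℝ) / 2)))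
    (A : ℝ) (hA : 0 < A) (τ : ℝ) :
    (fun X : ℕ =>
      (∑ d ∈ (Finset.Icc 1 X).filter (· ∈ S),
          ((A * (d : ℝ) : ℝ) : ℂ)
            ^ (-(2 * (π : ℂ) * Complex.I * (τ : ℂ)) / ((Real.log (A * X) : ℝ) : ℂ)))
        - (((Finset.Icc 1 X).filter (· ∈ S)).card : ℂ)
            * (1 - 2 * (π : ℂ) * Complex.I * (τ : ℂ) / ((Real.log (A * X) : ℝ) : ℂ))⁻¹
            * Complex.exp (-(2 * (π : ℂ) * Complex.I * (τ : ℂ))))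
      =O[atTop] (fun X : ℕ => (X : ℝ) ^ ((1 : ℝ) / 2)) :=
  sum_power_over_family_general S c hcount A hA τ
end

section
/- Let p ≥ 2 be a real number, let a > 0 be real, and let α₀, β₀ ∈ ℂ satisfy a < p^{1 + Re(α₀) + Re(β₀)}. For complex α, β, γ, δ with a < p^{1 + Re(α) + Re(β)}, define W(α, β, γ, δ) := (Σ_{m=0}^{∞} a^m p^{−(1+α+β)m}) · (1 − a·p^{−(1+α+δ)} − a·p^{−(1+β+γ)} + a·p^{−(1+γ+δ)}). Then the mixed partial derivative ∂²W/∂β∂α, taken with γ and δ held fixed and afterwards evaluated at γ = α = α₀ and δ = β = β₀, equals (log p)² / (a^{−1}·p^{1+α₀+β₀} − 1). -/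
/-!
Summing the geometric series,
`W(α, β, γ, δ) = (1 - u(α+β))⁻¹ (1 - u(α+δ) - u(β+γ) + u(γ+δ))` with `u(z) = a p^{-(1+z)}`.
Differentiating in `α` at `α = γ` gives `(u'(γ+β) - u'(γ+δ)) / (1 - u(γ+β))`, whose numerator
vanishes at `β = δ`, so the mixed partial is `u''(γ+δ) / (1 - u(γ+δ))`.
Since `u'' = (log p)² u`, this is `(log p)² / (u(γ+δ)⁻¹ - 1)`.
-/

open Complex Filter Topology

theorem deriv_deriv_congr_of_eventuallyEq {𝕜 F : Type*} [NontriviallyNormedField 𝕜]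
    [NormedAddCommGroup F] [NormedSpace 𝕜 F] {f g : 𝕜 → 𝕜 → F} {x₀ y₀ : 𝕜}
    (h : ∀ᶠ q in 𝓝 (x₀, y₀), f q.1 q.2 = g q.1 q.2) :
    deriv (fun y => deriv (fun x => f x y) x₀) y₀
      = deriv (fun y => deriv (fun x => g x y) x₀) y₀ := by
  rw [nhds_prod_eq] at h
  obtain ⟨P, hP, Q, hQ, hPQ⟩ := eventually_prod_iff.mp h
  refine EventuallyEq.deriv_eq ?_
  filter_upwards [hQ] with y hy
  exact EventuallyEq.deriv_eq (hP.mono fun x hx => hPQ hx hy)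

noncomputable def ratiosLocalFactor (u : ℂ → ℂ) (α β γ δ : ℂ) : ℂ :=
  (1 - u (α + β))⁻¹ * (1 - u (α + δ) - u (β + γ) + u (γ + δ))

section LocalFactor

variable {u u' : ℂ → ℂ}

theorem hasDerivAt_ratiosLocalFactor_left (hu : ∀ z, HasDerivAt u (u' z) z) {β γ δ : ℂ}
    (h : u (γ + β) ≠ 1) :
    HasDerivAt (fun α => ratiosLocalFactor u α β γ δ)
      ((u' (γ + β) - u' (γ + δ)) / (1 - u (γ + β))) γ := by
  have h' : 1 - u (γ + β) ≠ 0 := sub_ne_zero.mpr h.symm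
  have hden := (((hu (γ + β)).comp_add_const γ β).const_sub 1).fun_inv h'
  have hnum := ((((hu (γ + δ)).comp_add_const γ δ).const_sub 1).sub_const
    (u (β + γ))).add_const (u (γ + δ))
  refine (hden.fun_mul hnum).congr_deriv ?_
  rw [add_comm β γ]
  field_simp
  ring

theorem deriv_deriv_ratiosLocalFactor (hu : ∀ z, HasDerivAt u (u' z) z) {u'' γ δ : ℂ}
    (hu' : HasDerivAt u' u'' (γ + δ)) (h : u (γ + δ) ≠ 1) :
    deriv (fun β => deriv (fun α => ratiosLocalFactor u α β γ δ) γ) δ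
      = u'' / (1 - u (γ + δ)) := by
  have hne : ∀ᶠ β in 𝓝 δ, u (γ + β) ≠ 1 :=
    ((hu (γ + δ)).continuousAt.comp_of_eq (continuous_const_add γ).continuousAt rfl).eventually_ne
      h
  have hinner : (fun β => deriv (fun α => ratiosLocalFactor u α β γ δ) γ) =ᶠ[𝓝 δ]
      fun β => (u' (γ + β) - u' (γ + δ)) / (1 - u (γ + β)) :=
    hne.mono fun β hβ => (hasDerivAt_ratiosLocalFactor_left hu hβ).deriv
  have h' : 1 - u (γ + δ) ≠ 0 := sub_ne_zero.mpr h.symm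
  have hnum := (hu'.comp_const_add γ δ).sub_const (u' (γ + δ))
  have hden := ((hu (γ + δ)).comp_const_add γ δ).const_sub 1
  rw [hinner.deriv_eq, (hnum.fun_div hden h').deriv]
  field_simp
  ring

end LocalFactor


theorem hasDerivAt_const_mul_cpow_neg_one_add (c : ℂ) {p : ℂ} (hp : p ≠ 0) (z : ℂ) :
    HasDerivAt (fun z => c * p ^ (-(1 + z))) (-log p * (c * p ^ (-(1 + z)))) z := by
  have h := (((hasDerivAt_id z).const_add 1).fun_neg.const_cpow (Or.inl hp)).const_mul c
  refine h.congr_deriv ?_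
  rw [id]
  ring

theorem norm_ofReal_mul_cpow_neg_one_add_lt_one_iff {a p : ℝ} (ha : 0 < a) (hp : 0 < p) (z : ℂ) :
    ‖(a : ℂ) * (p : ℂ) ^ (-(1 + z))‖ < 1 ↔ a < p ^ (1 + z.re) := by
  rw [norm_mul, norm_real, Real.norm_of_nonneg ha.le, norm_cpow_eq_rpow_re_of_pos hp, neg_re,
    add_re, one_re, Real.rpow_neg hp.le, ← div_eq_mul_inv, div_lt_one (by positivity)]

theorem mul_div_one_sub_eq_div_inv_sub_one {K : Type*} [Field K] (x : K) {c : K} (hc : c ≠ 0) :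
    x * c / (1 - c) = x / (c⁻¹ - 1) := by
  rw [← div_div_div_cancel_right₀ hc, sub_div, one_div, div_self hc, mul_div_cancel_right₀ x hc]

/-- The ramified local factor computation (equation (5.10)): with
`W(α,β,γ,δ) = (∑_m a^m p^{-(1+α+β)m})(1 - a p^{-(1+α+δ)} - a p^{-(1+β+γ)} + a p^{-(1+γ+δ)})`,
the mixed partial `∂²W/∂β∂α`, with `γ, δ` held fixed and afterwards evaluated at
`γ = α = α₀`, `δ = β = β₀`, equals `(log p)² / (a⁻¹ p^{1+α₀+β₀} - 1)`. -/
theorem ramified_local_factor_mixed_partial (p : ℝ) (hp : 2 ≤ p)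
    (a : ℝ) (ha : 0 < a) (α₀ β₀ : ℂ)
    (hconv : a < p ^ (1 + α₀.re + β₀.re))
    (W : ℂ → ℂ → ℂ → ℂ → ℂ)
    (hW : ∀ α β γ δ : ℂ,
      W α β γ δ =
        (∑' m : ℕ, (a : ℂ) ^ m * ((p : ℂ) ^ (-(1 + α + β))) ^ m)
          * (1 - (a : ℂ) * (p : ℂ) ^ (-(1 + α + δ))
              - (a : ℂ) * (p : ℂ) ^ (-(1 + β + γ))
              + (a : ℂ) * (p : ℂ) ^ (-(1 + γ + δ)))) :
    deriv (fun β : ℂ => deriv (fun α : ℂ => W α β α₀ β₀) α₀) β₀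
      = ((Real.log p : ℂ)) ^ 2 / ((a : ℂ)⁻¹ * (p : ℂ) ^ (1 + α₀ + β₀) - 1) := by
  have hp0 : 0 < p := by linarith
  have hpc : (p : ℂ) ≠ 0 := ofReal_ne_zero.mpr hp0.ne'
  set u : ℂ → ℂ := fun z => (a : ℂ) * (p : ℂ) ^ (-(1 + z)) with hu_def
  have hu : ∀ z, HasDerivAt u (-log (p : ℂ) * u z) z :=
    hasDerivAt_const_mul_cpow_neg_one_add (a : ℂ) hpc
  have hu' :
      HasDerivAt (fun z => -log (p : ℂ) * u z) (log (p : ℂ) ^ 2 * u (α₀ + β₀)) (α₀ + β₀) :=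
    ((hu _).const_mul _).congr_deriv (by ring)
  have hu₀ : ‖u (α₀ + β₀)‖ < 1 := by
    rwa [norm_ofReal_mul_cpow_neg_one_add_lt_one_iff ha hp0, add_re, ← add_assoc]
  have hW_eq : ∀ᶠ q : ℂ × ℂ in 𝓝 (α₀, β₀),
      W q.1 q.2 α₀ β₀ = ratiosLocalFactor u q.1 q.2 α₀ β₀ := by
    have hopen : IsOpen {q : ℂ × ℂ | ‖u (q.1 + q.2)‖ < 1} :=
      isOpen_lt ((continuous_iff_continuousAt.mpr fun z => (hu z).continuousAt).comp
        continuous_add).norm continuous_const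
    filter_upwards [hopen.mem_nhds hu₀] with q hq
    rw [hW, ratiosLocalFactor, ← tsum_geometric_of_norm_lt_one hq]
    simp only [hu_def, mul_pow, add_assoc]
  have hu₁ : u (α₀ + β₀) ≠ 1 := fun h => by simp [h] at hu₀
  have hc₀ : u (α₀ + β₀) ≠ 0 :=
    mul_ne_zero (ofReal_ne_zero.mpr ha.ne') (cpow_ne_zero_iff.mpr (Or.inl hpc))
  have hinv : (a : ℂ)⁻¹ * (p : ℂ) ^ (1 + α₀ + β₀) = (u (α₀ + β₀))⁻¹ := by
    rw [hu_def, mul_inv, cpow_neg, inv_inv, add_assoc]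
  rw [deriv_deriv_congr_of_eventuallyEq (g := fun α β => ratiosLocalFactor u α β α₀ β₀) hW_eq,
    deriv_deriv_ratiosLocalFactor hu hu' hu₁, mul_div_one_sub_eq_div_inv_sub_one _ hc₀, hinv,
    ofReal_log hp0.le]
end

section
/- Let R > 0 and e₁, e₂ ∈ ℝ with 3e₂ − 4e₁ > 0. For N > 0 define Φ(N) := ∫₀¹ ((e₁ − e₂·sin²(πy))/R² + sin²(πy)/(3N²))² dy. Then Φ attains its unique minimum on (0, ∞) at N* = R/√(3e₂ − 4e₁); that is, Φ(N*) < Φ(N) for every N > 0 with N ≠ N*. -/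
/-!
With `a = e₁/R²` and `b = 1/(3N²) - e₂/R²` the integrand is `(a + b sin²(πy))²`, and the
moments `∫₀¹ sin²(πy) = 1/2`, `∫₀¹ sin⁴(πy) = 3/8` give `Φ(N) = a² + ab + 3b²/8
= a²/3 + 3(b + 4a/3)²/8`. This is strictly minimal exactly at `b = -4a/3`, i.e. at
`1/(3N²) = (3e₂ - 4e₁)/(3R²)`, and `N ↦ 1/(3N²)` is injective on `(0, ∞)`.
-/

open Real

theorem integral_sin_mul_pi_sq : ∫ y in (0:ℝ)..1, sin (π * y) ^ 2 = 1 / 2 := by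
  rw [intervalIntegral.integral_comp_mul_left (fun x => sin x ^ 2) pi_ne_zero]
  simp [integral_sin_sq, field]

theorem integral_sin_mul_pi_pow_four : ∫ y in (0:ℝ)..1, sin (π * y) ^ 4 = 3 / 8 := by
  rw [intervalIntegral.integral_comp_mul_left (fun x => sin x ^ 4) pi_ne_zero, mul_zero,
    mul_one, integral_sin_pow 2, integral_sin_sq]
  simp [field]
  ring

theorem integral_add_mul_sin_mul_pi_sq_sq (a b : ℝ) :
    ∫ y in (0:ℝ)..1, (a + b * sin (π * y) ^ 2) ^ 2 = a ^ 2 + a * b + 3 / 8 * b ^ 2 := by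
  have h₂ : IntervalIntegrable (fun y => 2 * a * b * sin (π * y) ^ 2) MeasureTheory.volume 0 1 :=
    (by fun_prop : Continuous _).intervalIntegrable _ _
  have h₄ : IntervalIntegrable (fun y => b ^ 2 * sin (π * y) ^ 4) MeasureTheory.volume 0 1 :=
    (by fun_prop : Continuous _).intervalIntegrable _ _
  have hexpand : ∀ y : ℝ, (a + b * sin (π * y) ^ 2) ^ 2
      = a ^ 2 + (2 * a * b * sin (π * y) ^ 2 + b ^ 2 * sin (π * y) ^ 4) := fun y => by ring
  simp_rw [hexpand]
  rw [intervalIntegral.integral_add intervalIntegrable_const (h₂.add h₄),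
    intervalIntegral.integral_add h₂ h₄, intervalIntegral.integral_const_mul,
    intervalIntegral.integral_const_mul, integral_sin_mul_pi_sq, integral_sin_mul_pi_pow_four,
    intervalIntegral.integral_const, sub_zero, one_smul]
  ring

theorem quadratic_lt_of_ne_vertex {a b : ℝ} (hb : b ≠ -4 / 3 * a) :
    a ^ 2 + a * (-4 / 3 * a) + 3 / 8 * (-4 / 3 * a) ^ 2 < a ^ 2 + a * b + 3 / 8 * b ^ 2 := by
  have hne : b + 4 / 3 * a ≠ 0 := fun h => hb (by linarith)
  have : 0 < (b + 4 / 3 * a) ^ 2 := by positivity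
  nlinarith

theorem inv_three_mul_sq_injOn : Set.InjOn (fun N : ℝ => 1 / (3 * N ^ 2)) (Set.Ioi 0) := by
  intro N hN M hM h
  have hsq : N ^ 2 = M ^ 2 := by simpa using h
  exact (pow_left_inj₀ hN.le hM.le two_ne_zero).1 hsq

/-- The `L²`-minimization determining the effective matrix size in the unitary case:
`Φ(N) = ∫₀¹ ((e₁ - e₂ sin²(πy))/R² + sin²(πy)/(3N²))² dy` has its unique minimum
on `(0, ∞)` at `N* = R/√(3e₂ - 4e₁)`. -/
theorem effective_matrix_size_minimizer (R e₁ e₂ : ℝ) (hR : 0 < R)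
    (hpos : 0 < 3 * e₂ - 4 * e₁)
    (Φ : ℝ → ℝ)
    (hΦ : ∀ N : ℝ, Φ N =
      ∫ y in (0:ℝ)..1,
        ((e₁ - e₂ * Real.sin (π * y) ^ 2) / R ^ 2
          + Real.sin (π * y) ^ 2 / (3 * N ^ 2)) ^ 2) :
    ∀ N : ℝ, 0 < N → N ≠ R / Real.sqrt (3 * e₂ - 4 * e₁) →
      Φ (R / Real.sqrt (3 * e₂ - 4 * e₁)) < Φ N := by
  intro N hN hne
  set Nstar := R / Real.sqrt (3 * e₂ - 4 * e₁)
  have hNstar : 0 < Nstar := div_pos hR (Real.sqrt_pos.2 hpos)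
  have hΦ_eq : ∀ M : ℝ, M ≠ 0 → Φ M = (e₁ / R ^ 2) ^ 2
      + e₁ / R ^ 2 * (1 / (3 * M ^ 2) - e₂ / R ^ 2)
      + 3 / 8 * (1 / (3 * M ^ 2) - e₂ / R ^ 2) ^ 2 := by
    intro M hM
    rw [hΦ M, ← integral_add_mul_sin_mul_pi_sq_sq]
    congr 1 with y
    field_simp
    ring
  have hvertex : 1 / (3 * Nstar ^ 2) - e₂ / R ^ 2 = -4 / 3 * (e₁ / R ^ 2) := by
    rw [div_pow, Real.sq_sqrt hpos.le]
    field_simp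
    ring
  rw [hΦ_eq N hN.ne', hΦ_eq Nstar hNstar.ne', hvertex]
  refine quadratic_lt_of_ne_vertex fun h => hne ?_
  exact inv_three_mul_sq_injOn hN hNstar
    (show 1 / (3 * N ^ 2) = 1 / (3 * Nstar ^ 2) by linarith)
end
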